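/- Let S1, S2 be equivalence relations on a set V and X ⊆ V. If S1∖X = S1 (i.e., no element of X is related by S1 to a distinct element), then (S1 ⊔ S2)∖X = (S1∖X) ⊔ (S2∖X) = S1 ⊔ (S2∖X), where ⊔ is the join of equivalence relations and S∖X is the restriction removing X. -/

import Mathlib

/-!
Since `S1` relates no point of `X` to another point, a point of `X` is linked by `S1 ⊔ S2` to
the outside of `X` only through `S2`. Send a point outside `X` to its class in
`T = S1 ⊔ S2∖X`, and a point of `X` to the set of `T`-classes of its `S2`-neighbours outside
`X`. The kernel of this map is an equivalence relation containing `S1` and `S2`, hence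
`S1 ⊔ S2`, and between points outside `X` it is contained in `T`.
-/

/-- The restriction `S∖X`: relates `a` and `b` iff `a = b`, or `(a,b) ∈ S` with `a ∉ X`, `b ∉ X`. -/
def Setoid.restrict {V : Type*} (S : Setoid V) (X : Set V) : Setoid V where
  r a b := a = b ∨ (S.r a b ∧ a ∉ X ∧ b ∉ X)
  iseqv := by
    constructor
    · intro a; exact Or.inl rfl
    · rintro a b (rfl | ⟨h, ha, hb⟩)
      · exact Or.inl rfl
      · exact Or.inr ⟨S.symm h, hb, ha⟩
    · rintro a b c (rfl | ⟨h, ha, hb⟩) (rfl | ⟨h', hb', hc⟩)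
      · exact Or.inl rfl
      · exact Or.inr ⟨h', hb', hc⟩
      · exact Or.inr ⟨h, ha, hb⟩
      · exact Or.inr ⟨S.trans h h', ha, hc⟩

namespace Setoid

variable {V : Type*} {S S' T : Setoid V} {X : Set V}

theorem eq_or_notMem_of_restrict_eq_self (h : S.restrict X = S) {a b : V} (hab : S a b) :
    a = b ∨ a ∉ X ∧ b ∉ X := by
  rw [← h] at hab
  exact hab.imp_right And.right

theorem restrict_mono (hS : S ≤ S') : S.restrict X ≤ S'.restrict X := by
  rintro a b (rfl | ⟨hab, ha, hb⟩)
  exacts [Or.inl rfl, Or.inr ⟨hS hab, ha, hb⟩]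

theorem restrict_sup_restrict_le : S.restrict X ⊔ S'.restrict X ≤ (S ⊔ S').restrict X :=
  sup_le (restrict_mono le_sup_left) (restrict_mono le_sup_right)

open Classical in
def exitClasses (S T : Setoid V) (X : Set V) (x : V) : Set (Quotient T) :=
  if x ∈ X then Quotient.mk T '' {y | y ∉ X ∧ S x y} else {Quotient.mk T x}

theorem exitClasses_of_notMem {x : V} (hx : x ∉ X) :
    exitClasses S T X x = {Quotient.mk T x} := if_neg hx

theorem exitClasses_eq_singleton (hS : S.restrict X ≤ T) {a b : V} (hab : S a b) (hb : b ∉ X) :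
    exitClasses S T X a = {Quotient.mk T b} := by
  by_cases ha : a ∈ X
  · rw [exitClasses, if_pos ha]
    ext q
    constructor
    · rintro ⟨y, ⟨hy, hay⟩, rfl⟩
      exact Quotient.sound (hS (Or.inr ⟨S.trans (S.symm hay) hab, hy, hb⟩))
    · rintro rfl
      exact ⟨b, ⟨hb, hab⟩, rfl⟩
  · rw [exitClasses_of_notMem ha, Quotient.sound (hS (Or.inr ⟨hab, ha, hb⟩))]

theorem le_ker_exitClasses (hS : S.restrict X ≤ T) : S ≤ ker (exitClasses S T X) := by
  intro a b hab
  rw [ker_def]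
  by_cases hb : b ∉ X
  · rw [exitClasses_eq_singleton hS hab hb, exitClasses_of_notMem hb]
  by_cases ha : a ∉ X
  · rw [exitClasses_eq_singleton hS (S.symm hab) ha, exitClasses_of_notMem ha]
  rw [not_not] at ha hb
  have hS_eq : {y | y ∉ X ∧ S a y} = {y | y ∉ X ∧ S b y} := by
    ext y
    exact and_congr_right fun _ => ⟨S.trans (S.symm hab), S.trans hab⟩
  rw [exitClasses, exitClasses, if_pos ha, if_pos hb, hS_eq]

theorem restrict_sup_le (h : S.restrict X = S) (hST : S ≤ T) (hS'T : S'.restrict X ≤ T) :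
    (S ⊔ S').restrict X ≤ T := by
  have hS : S ≤ ker (exitClasses S' T X) := by
    intro a b hab
    rcases eq_or_notMem_of_restrict_eq_self h hab with rfl | ⟨ha, hb⟩
    · exact (ker _).refl a
    · rw [ker_def, exitClasses_of_notMem ha, exitClasses_of_notMem hb,
        Quotient.sound (hST hab)]
  rintro a b (rfl | ⟨hab, ha, hb⟩)
  · exact T.refl a
  · have hker := sup_le hS (le_ker_exitClasses hS'T) hab
    rw [ker_def, exitClasses_of_notMem ha, exitClasses_of_notMem hb,
      Set.singleton_eq_singleton_iff] at hker
    exact Quotient.exact hker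

theorem restrict_sup_eq_sup_restrict (h : S.restrict X = S) :
    (S ⊔ S').restrict X = S ⊔ S'.restrict X := by
  refine le_antisymm (restrict_sup_le h le_sup_left le_sup_right) ?_
  calc S ⊔ S'.restrict X = S.restrict X ⊔ S'.restrict X := by rw [h]
    _ ≤ (S ⊔ S').restrict X := restrict_sup_restrict_le

end Setoid

theorem stmt6 {V : Type*} (S1 S2 : Setoid V) (X : Set V) (h : S1.restrict X = S1) :
    (S1 ⊔ S2).restrict X = (S1.restrict X) ⊔ (S2.restrict X) ∧
      (S1 ⊔ S2).restrict X = S1 ⊔ (S2.restrict X) := by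
  have key := Setoid.restrict_sup_eq_sup_restrict (S' := S2) h
  exact ⟨by rw [key, h], key⟩
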